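/- arXiv:math/0501271 — 5 statements merged into one kernel-verified Lean document; each statement's English description precedes it below -/
import Mathlib

section
/- (Theorem 1.2, additive version of the Lambek–Carlitz characterization.) For an arithmetical function f : ℤ⁺ → ℂ, the following statements are equivalent: (1) f is completely additive, i.e. f(mn) = f(m) + f(n) for all m, n ∈ ℤ⁺; (2) f·(g *_D h) = (f·g) *_D h + g *_D (f·h) for all arithmetical functions g and h; (3) f·(g *_D g) = 2·((f·g) *_D g) for every arithmetical function g; (4) f·τ = 2·(f *_D ζ). -/
/-- The Dirichlet convolution of two arithmetical functions
`(f *_D g)(n) = ∑_{d ∣ n} f(d) g(n/d)`. -/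
noncomputable def dirichletConv (f g : ℕ → ℂ) : ℕ → ℂ :=
  fun n => ∑ d ∈ n.divisors, f d * g (n / d)

/-- The arithmetical function `ζ`, with `ζ(n) = 1` for all `n ∈ ℤ⁺`. -/
def zetaFn : ℕ → ℂ := fun _ => 1

/-- `τ = ζ *_D ζ`, the number-of-divisors function. -/
noncomputable def tauFn : ℕ → ℂ := dirichletConv zetaFn zetaFn

open Finset

/-! If `f` is completely additive then
`f n = f d + f (n / d)` for every divisor `d` of `n`, which is the Leibniz rule `(2)`; `(3)` and `(4)`
are its specialisations `h = g` and `g = ζ`. Conversely, `(4)` reads `τ(n) f(n) = 2 ∑_{d ∣ n} f(d)`,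
and since `τ(n) = 2` only for primes, this recursion determines `f` from its values at primes. The
completely additive function `n ↦ ∑_{p} f(p)` (sum over prime factors with multiplicity) also
satisfies `(4)` and agrees with `f` at primes, so the two coincide. -/

theorem dirichletConv_comm (g h : ℕ → ℂ) (n : ℕ) :
    dirichletConv g h n = dirichletConv h g n := by
  unfold dirichletConv
  rw [← Nat.sum_div_divisors n (fun d => h d * g (n / d))]
  refine sum_congr rfl fun d hd => ?_
  obtain ⟨hdvd, hn⟩ := Nat.mem_divisors.mp hd
  rw [Nat.div_div_self hdvd hn, mul_comm]

theorem dirichletConv_zetaFn_apply (g : ℕ → ℂ) (n : ℕ) :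
    dirichletConv g zetaFn n = ∑ d ∈ n.divisors, g d := by
  simp [dirichletConv, zetaFn]

theorem tauFn_apply (n : ℕ) : tauFn n = #n.divisors := by
  simp [tauFn, dirichletConv_zetaFn_apply, zetaFn]

theorem apply_eq_add_of_dvd {M : Type*} [Add M] {f : ℕ → M}
    (hf : ∀ m n : ℕ, 0 < m → 0 < n → f (m * n) = f m + f n) {d n : ℕ} (hn : 0 < n)
    (hd : d ∣ n) : f n = f d + f (n / d) := by
  rw [← hf d (n / d) (Nat.pos_of_dvd_of_pos hd hn) (Nat.div_pos (Nat.le_of_dvd hn hd)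
    (Nat.pos_of_dvd_of_pos hd hn)), Nat.mul_div_cancel' hd]

theorem mul_dirichletConv_of_additive {f : ℕ → ℂ}
    (hf : ∀ m n : ℕ, 0 < m → 0 < n → f (m * n) = f m + f n) (g h : ℕ → ℂ) {n : ℕ}
    (hn : 0 < n) :
    f n * dirichletConv g h n
      = dirichletConv (fun k => f k * g k) h n + dirichletConv g (fun k => f k * h k) n := by
  unfold dirichletConv
  rw [mul_sum, ← sum_add_distrib]
  refine sum_congr rfl fun d hd => ?_
  rw [apply_eq_add_of_dvd hf hn (Nat.dvd_of_mem_divisors hd)]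
  ring

theorem mul_card_divisors_of_additive {R : Type*} [CommSemiring R] {f : ℕ → R}
    (hf : ∀ m n : ℕ, 0 < m → 0 < n → f (m * n) = f m + f n) {n : ℕ} (hn : 0 < n) :
    f n * #n.divisors = 2 * ∑ d ∈ n.divisors, f d := by
  calc f n * #n.divisors = ∑ d ∈ n.divisors, (f d + f (n / d)) := by
        rw [mul_comm, ← nsmul_eq_mul, ← sum_const]
        exact sum_congr rfl fun d hd => apply_eq_add_of_dvd hf hn (Nat.dvd_of_mem_divisors hd)
    _ = 2 * ∑ d ∈ n.divisors, f d := by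
        rw [sum_add_distrib, Nat.sum_div_divisors, two_mul]

theorem Nat.prime_of_card_divisors_eq_two {n : ℕ} (h : #n.divisors = 2) : n.Prime := by
  have hn : n ≠ 0 := by rintro rfl; simp at h
  have h1 : n ≠ 1 := by rintro rfl; simp at h
  have hdiv : n.divisors = {1, n} := by
    refine (eq_of_subset_of_card_le (fun m hm => ?_) ?_).symm
    · rcases mem_insert.mp hm with rfl | hm
      · exact Nat.one_mem_divisors.mpr hn
      · exact (mem_singleton.mp hm) ▸ Nat.mem_divisors_self n hn
    · rw [h, card_pair (Ne.symm h1)]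
  refine Nat.prime_def.mpr ⟨by omega, fun m hm => ?_⟩
  simpa [hdiv] using Nat.mem_divisors.mpr ⟨hm, hn⟩

theorem eq_of_mul_card_divisors_eq {R : Type*} [CommRing R] [NoZeroDivisors R] [CharZero R]
    {f₁ f₂ : ℕ → R} (h₁ : ∀ n, 0 < n → f₁ n * #n.divisors = 2 * ∑ d ∈ n.divisors, f₁ d)
    (h₂ : ∀ n, 0 < n → f₂ n * #n.divisors = 2 * ∑ d ∈ n.divisors, f₂ d)
    (hprime : ∀ p, p.Prime → f₁ p = f₂ p) {n : ℕ} (hn : 0 < n) : f₁ n = f₂ n := by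
  induction n using Nat.strong_induction_on with
  | _ n ih =>
  by_cases hp : n.Prime
  · exact hprime n hp
  have hproper : ∑ d ∈ n.properDivisors, f₁ d = ∑ d ∈ n.properDivisors, f₂ d :=
    sum_congr rfl fun d hd =>
      ih d (Nat.mem_properDivisors.mp hd).2 (Nat.pos_of_mem_properDivisors hd)
  have hsplit (f : ℕ → R) : ∑ d ∈ n.divisors, f d = f n + ∑ d ∈ n.properDivisors, f d := by
    rw [← Nat.cons_self_properDivisors hn.ne', sum_cons]
  have hcard : (#n.divisors : R) - 2 ≠ 0 := by
    rw [sub_ne_zero]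
    exact_mod_cast mt Nat.prime_of_card_divisors_eq_two hp
  have hdiff : ((#n.divisors : R) - 2) * (f₁ n - f₂ n) = 0 := by
    have e₁ := h₁ n hn
    have e₂ := h₂ n hn
    rw [hsplit] at e₁ e₂
    linear_combination e₁ - e₂ + 2 * hproper
  exact sub_eq_zero.mp ((mul_eq_zero.mp hdiff).resolve_left hcard)

def sumPrimeFactors {M : Type*} [AddMonoid M] (f : ℕ → M) (n : ℕ) : M :=
  (n.primeFactorsList.map f).sum

theorem sumPrimeFactors_mul {M : Type*} [AddCommMonoid M] (f : ℕ → M) {m n : ℕ} (hm : 0 < m)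
    (hn : 0 < n) : sumPrimeFactors f (m * n) = sumPrimeFactors f m + sumPrimeFactors f n := by
  rw [sumPrimeFactors, ((Nat.perm_primeFactorsList_mul hm.ne' hn.ne').map f).sum_eq,
    List.map_append, List.sum_append, sumPrimeFactors, sumPrimeFactors]

theorem sumPrimeFactors_prime {M : Type*} [AddMonoid M] (f : ℕ → M) {p : ℕ} (hp : p.Prime) :
    sumPrimeFactors f p = f p := by
  simp [sumPrimeFactors, Nat.primeFactorsList_prime hp]

/-- Theorem 1.2 (additive version of the Lambek–Carlitz characterization):
characterization of completely additive arithmetical functions. -/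
theorem stmt_1 (f : ℕ → ℂ) :
    [(∀ m n : ℕ, 0 < m → 0 < n → f (m * n) = f m + f n),
     (∀ g h : ℕ → ℂ, ∀ n : ℕ, 0 < n →
        f n * dirichletConv g h n
          = dirichletConv (fun k => f k * g k) h n
              + dirichletConv g (fun k => f k * h k) n),
     (∀ g : ℕ → ℂ, ∀ n : ℕ, 0 < n →
        f n * dirichletConv g g n
          = 2 * dirichletConv (fun k => f k * g k) g n),
     (∀ n : ℕ, 0 < n → f n * tauFn n = 2 * dirichletConv f zetaFn n)].TFAE := by
  tfae_have 1 → 2 := fun hf g h n hn => mul_dirichletConv_of_additive hf g h hn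
  tfae_have 2 → 3 := fun h g n hn => by
    rw [h g g n hn, dirichletConv_comm g, two_mul]
  tfae_have 3 → 4 := fun h n hn => by
    simpa [zetaFn, tauFn] using h zetaFn n hn
  tfae_have 4 → 1 := by
    intro h m n hm hn
    have hf (k : ℕ) (hk : 0 < k) : f k * #k.divisors = 2 * ∑ d ∈ k.divisors, f d := by
      rw [← tauFn_apply, ← dirichletConv_zetaFn_apply, h k hk]
    have hf_eq (k : ℕ) (hk : 0 < k) : f k = sumPrimeFactors f k :=
      eq_of_mul_card_divisors_eq hf
        (fun _ hk => mul_card_divisors_of_additive (fun _ _ => sumPrimeFactors_mul f) hk)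
        (fun p hp => (sumPrimeFactors_prime f hp).symm) hk
    rw [hf_eq _ (mul_pos hm hn), hf_eq m hm, hf_eq n hn, sumPrimeFactors_mul f hm hn]
  tfae_finish
end

section
/- (Carlitz implication in Theorem 1.1.) If an arithmetical function f : ℤ⁺ → ℂ satisfies f(n)·τ(n) = (f *_D f)(n) for all n ∈ ℤ⁺, then f is completely multiplicative, i.e. f(mn) = f(m)·f(n) for all m, n ∈ ℤ⁺. -/
open Finset

def nontrivialDivisors (n : ℕ) : Finset ℕ := n.properDivisors.erase 1

lemma mem_nontrivialDivisors {n d : ℕ} :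
    d ∈ nontrivialDivisors n ↔ d ∣ n ∧ d ≠ 1 ∧ d < n := by
  rw [nontrivialDivisors, mem_erase, Nat.mem_properDivisors]
  tauto

lemma nontrivialDivisors_nonempty {n : ℕ} (hn : 1 < n) (hp : ¬n.Prime) :
    (nontrivialDivisors n).Nonempty := by
  obtain ⟨m, hmn, hm, hmlt⟩ := Nat.exists_dvd_of_not_prime2 hn hp
  exact ⟨m, mem_nontrivialDivisors.mpr ⟨hmn, by omega, hmlt⟩⟩

lemma sum_divisors_eq_add_sum_nontrivialDivisors {M : Type*} [AddCommMonoid M] (u : ℕ → M)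
    {n : ℕ} (hn : 1 < n) :
    ∑ d ∈ n.divisors, u d = u 1 + u n + ∑ d ∈ nontrivialDivisors n, u d := by
  rw [← Nat.cons_self_properDivisors (by omega), sum_cons, nontrivialDivisors,
    ← add_sum_erase _ _ (Nat.one_mem_properDivisors_iff_one_lt.mpr hn)]
  abel

lemma tauFn_eq_card_nontrivialDivisors_add_two {n : ℕ} (hn : 1 < n) :
    tauFn n = #(nontrivialDivisors n) + 2 := by
  simp only [tauFn, dirichletConv, zetaFn, mul_one,
    sum_divisors_eq_add_sum_nontrivialDivisors _ hn, sum_const, nsmul_eq_mul]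
  ring

lemma dirichletConv_self_eq (f : ℕ → ℂ) {n : ℕ} (hn : 1 < n) :
    dirichletConv f f n =
      2 * f 1 * f n + ∑ d ∈ nontrivialDivisors n, f d * f (n / d) := by
  rw [dirichletConv, sum_divisors_eq_add_sum_nontrivialDivisors _ hn, Nat.div_one,
    Nat.div_self (by omega)]
  ring

noncomputable def extendFromPrimes (f : ℕ → ℂ) (n : ℕ) : ℂ :=
  n.factorization.prod fun p k => f p ^ k

lemma extendFromPrimes_one (f : ℕ → ℂ) : extendFromPrimes f 1 = 1 := by
  simp [extendFromPrimes]

lemma extendFromPrimes_prime (f : ℕ → ℂ) {p : ℕ} (hp : p.Prime) :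
    extendFromPrimes f p = f p := by
  simp [extendFromPrimes, hp.factorization]

lemma extendFromPrimes_mul (f : ℕ → ℂ) {m n : ℕ} (hm : m ≠ 0) (hn : n ≠ 0) :
    extendFromPrimes f (m * n) = extendFromPrimes f m * extendFromPrimes f n := by
  rw [extendFromPrimes, Nat.factorization_mul hm hn,
    Finsupp.prod_add_index' (fun _ => pow_zero _) (fun _ _ _ => pow_add _ _ _)]
  rfl

lemma isIdempotentElem_map_one {f : ℕ → ℂ}
    (hf : ∀ n : ℕ, 0 < n → f n * tauFn n = dirichletConv f f n) :
    IsIdempotentElem (f 1) := by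
  show f 1 * f 1 = f 1
  simpa [tauFn, dirichletConv, zetaFn] using (hf 1 one_pos).symm

lemma card_nontrivialDivisors_mul_eq {f : ℕ → ℂ}
    (hf : ∀ n : ℕ, 0 < n → f n * tauFn n = dirichletConv f f n)
    {n : ℕ} (hn : 1 < n) :
    (#(nontrivialDivisors n) + 2 * (1 - f 1)) * f n =
      ∑ d ∈ nontrivialDivisors n, f d * f (n / d) := by
  have := hf n (by omega)
  rw [tauFn_eq_card_nontrivialDivisors_add_two hn, dirichletConv_self_eq f hn] at this
  linear_combination this

lemma eq_zero_of_map_one_eq_zero {f : ℕ → ℂ}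
    (hf : ∀ n : ℕ, 0 < n → f n * tauFn n = dirichletConv f f n)
    (h1 : f 1 = 0) : ∀ n, 0 < n → f n = 0 := by
  intro n
  induction n using Nat.strong_induction_on with
  | _ n ih =>
    intro hn
    obtain rfl | hn1 : n = 1 ∨ 1 < n := by omega
    · exact h1
    have hsum : ∑ d ∈ nontrivialDivisors n, f d * f (n / d) = 0 := by
      refine sum_eq_zero fun d hd => ?_
      obtain ⟨hdn, hd1, hdlt⟩ := mem_nontrivialDivisors.mp hd
      rw [ih d hdlt (Nat.pos_of_dvd_of_pos hdn hn), zero_mul]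
    have := card_nontrivialDivisors_mul_eq hf hn1
    rw [h1, hsum, sub_zero, mul_one] at this
    exact (mul_eq_zero.mp this).resolve_left (by norm_cast)

lemma eq_extendFromPrimes_of_map_one_eq_one {f : ℕ → ℂ}
    (hf : ∀ n : ℕ, 0 < n → f n * tauFn n = dirichletConv f f n)
    (h1 : f 1 = 1) :
    ∀ n, 0 < n → f n = extendFromPrimes f n := by
  intro n
  induction n using Nat.strong_induction_on with
  | _ n ih =>
    intro hn
    obtain rfl | hn1 : n = 1 ∨ 1 < n := by omega
    · rw [h1, extendFromPrimes_one]
    by_cases hp : n.Prime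
    · rw [extendFromPrimes_prime f hp]
    have hterm : ∀ d ∈ nontrivialDivisors n, f d * f (n / d) = extendFromPrimes f n := by
      intro d hd
      obtain ⟨⟨e, rfl⟩, hd1, hdlt⟩ := mem_nontrivialDivisors.mp hd
      have hd0 : 0 < d := Nat.pos_of_mul_pos_right hn
      have he0 : 0 < e := Nat.pos_of_mul_pos_left hn
      rw [Nat.mul_div_cancel_left e hd0, ih d hdlt hd0,
        ih e (lt_mul_left he0 (Nat.lt_of_le_of_ne hd0 hd1.symm)) he0,
        extendFromPrimes_mul f hd0.ne' he0.ne']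
    have := card_nontrivialDivisors_mul_eq hf hn1
    rw [sum_congr rfl hterm, sum_const, nsmul_eq_mul, h1, sub_self, mul_zero, add_zero] at this
    have hcard : (#(nontrivialDivisors n) : ℂ) ≠ 0 := by
      exact_mod_cast (nontrivialDivisors_nonempty hn1 hp).card_ne_zero
    exact mul_left_cancel₀ hcard this

/-- Carlitz implication of Theorem 1.1: if `f · τ = f *_D f` then `f` is
completely multiplicative. -/
theorem stmt_2 (f : ℕ → ℂ)
    (h : ∀ n : ℕ, 0 < n → f n * tauFn n = dirichletConv f f n) :
    ∀ m n : ℕ, 0 < m → 0 < n → f (m * n) = f m * f n := by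
  intro m n hm hn
  obtain h1 | h1 := IsIdempotentElem.iff_eq_zero_or_one.mp (isIdempotentElem_map_one h)
  · have hzero := eq_zero_of_map_one_eq_zero h h1
    rw [hzero m hm, hzero n hn, hzero (m * n) (Nat.mul_pos hm hn), mul_zero]
  · have hext := eq_extendFromPrimes_of_map_one_eq_one h h1
    rw [hext m hm, hext n hn, hext (m * n) (Nat.mul_pos hm hn),
      extendFromPrimes_mul f hm.ne' hn.ne']
end

section
/- (Theorem 1.4, additive version of Theorem 1.3.) Let F = Σ_{n≥0} a_n X^n ∈ ℂ[[X]] be a formal power series with a_1 ≠ 0. The following statements are equivalent: (1) a_0 = 0 and a_n = a_1/(n−1)! for all n ∈ ℤ⁺; (2) the arithmetical function η(F), defined by η(F)(m) = ω(m)!·a_{ω(m)}, is additive; (3) F ⊙ (G·H) = (F ⊙ G)·H + (F ⊙ H)·G for all G, H ∈ ℂ[[X]]; (4) F ⊙ (G·G) = 2·(F ⊙ G)·G for all G ∈ ℂ[[X]]; (5) Σ_{n≥0} 2^n a_n X^n = (Σ_{n≥0} (2/n!) X^n) · F. -/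
/-!
Write `bₙ = n! aₙ`; condition (1) says `bₙ = n b₁`, i.e. `F = a₁ X eˣ`. Since `η(F)(m) = b_{ω(m)}`
and `ω` is additive on coprime arguments and takes every value, (2) says that `n ↦ bₙ` is additive
on `ℕ`. Under (1), `F ⊙ G = a₁ X G'`, so (3) is the Leibniz rule. Since `F ⊙ eˣ = F` and
`eˣ · eˣ = e²ˣ`, (4) at `G = eˣ` is the functional equation (5): `F(2X) = 2 eˣ F(X)`. Comparing
coefficients of `Xⁿ` in it gives `(2ⁿ - 2) aₙ = (terms in a₀, …, aₙ₋₁)`, so its solutions are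
determined by `a₁`; as `a₁ X eˣ` is a solution, (5) implies (1).
-/

open PowerSeries

/-- The coefficientwise "multiplication" `⊙` of formal power series:
`(∑ aₙ Xⁿ) ⊙ (∑ bₙ Xⁿ) = ∑ n!·aₙ·bₙ Xⁿ`. -/
noncomputable def odot (F G : PowerSeries ℂ) : PowerSeries ℂ :=
  PowerSeries.mk fun n => (Nat.factorial n : ℂ) * PowerSeries.coeff n F * PowerSeries.coeff n G

/-- `η(∑ aₙ Xⁿ)(m) = ω(m)! · a_{ω(m)}`, where `ω(m)` is the number of distinct
prime factors of `m`. -/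
noncomputable def eta (F : PowerSeries ℂ) : ℕ → ℂ :=
  fun m => (Nat.factorial m.primeFactors.card : ℂ) * PowerSeries.coeff m.primeFactors.card F

/-- An arithmetical function is additive if `f(mn) = f(m) + f(n)` whenever
`gcd(m,n) = 1`. -/
def IsAddArith (f : ℕ → ℂ) : Prop :=
  ∀ m n : ℕ, 0 < m → 0 < n → Nat.Coprime m n → f (m * n) = f m + f n

open scoped Nat

lemma Nat.Coprime.card_primeFactors_mul {m n : ℕ} (h : m.Coprime n) :
    (m * n).primeFactors.card = m.primeFactors.card + n.primeFactors.card := by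
  rw [h.primeFactors_mul, Finset.card_union_of_disjoint h.disjoint_primeFactors]

lemma Nat.exists_prime_coprime {m : ℕ} (hm : 0 < m) : ∃ p, p.Prime ∧ m.Coprime p := by
  obtain ⟨p, hmp, hp⟩ := Nat.exists_infinite_primes (m + 1)
  exact ⟨p, hp, (Nat.coprime_comm.mp <|
    hp.coprime_iff_not_dvd.mpr fun hdvd => by have := Nat.le_of_dvd hm hdvd; omega)⟩

lemma Nat.exists_card_primeFactors_eq (k : ℕ) : ∃ m, 0 < m ∧ m.primeFactors.card = k := by
  induction k with
  | zero => exact ⟨1, one_pos, by simp⟩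
  | succ k ih =>
    obtain ⟨m, hm, rfl⟩ := ih
    obtain ⟨p, hp, hmp⟩ := Nat.exists_prime_coprime hm
    exact ⟨m * p, Nat.mul_pos hm hp.pos, by rw [hmp.card_primeFactors_mul, hp.primeFactors,
      Finset.card_singleton]⟩

lemma eq_nsmul_of_map_succ {M : Type*} [AddMonoid M] {g : ℕ → M} (h0 : g 0 = 0)
    (hsucc : ∀ k, g (k + 1) = g k + g 1) (n : ℕ) : g n = n • g 1 := by
  induction n with
  | zero => simp [h0]
  | succ n ih => rw [hsucc, ih, succ_nsmul]

lemma isAddArith_comp_card_primeFactors_iff (g : ℕ → ℂ) :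
    IsAddArith (fun m => g m.primeFactors.card) ↔ ∀ n : ℕ, g n = n * g 1 := by
  refine ⟨fun h n => ?_, fun h m n _ _ hmn => ?_⟩
  · have h0 : g 0 = 0 := by
      have h11 := h 1 1 one_pos one_pos (Nat.coprime_one_left 1)
      simp only [mul_one, Nat.primeFactors_one, Finset.card_empty] at h11
      linear_combination -h11
    refine (eq_nsmul_of_map_succ h0 (fun k => ?_) n).trans (nsmul_eq_mul _ _)
    obtain ⟨m, hm, rfl⟩ := Nat.exists_card_primeFactors_eq k
    obtain ⟨p, hp, hmp⟩ := Nat.exists_prime_coprime hm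
    have hadd : g (m * p).primeFactors.card = g m.primeFactors.card + g p.primeFactors.card :=
      h m p hm hp.pos hmp
    rwa [hmp.card_primeFactors_mul, hp.primeFactors, Finset.card_singleton] at hadd
  · change g _ = g _ + g _
    rw [hmn.card_primeFactors_mul, h (_ + _), h m.primeFactors.card, h n.primeFactors.card]
    push_cast
    ring

def LinearFactorialCoeffs (F : ℂ⟦X⟧) : Prop :=
  ∀ n : ℕ, (n ! : ℂ) * coeff n F = n * coeff 1 F

lemma linearFactorialCoeffs_iff (F : ℂ⟦X⟧) :
    LinearFactorialCoeffs F ↔ coeff 0 F = 0 ∧ ∀ n : ℕ, 0 < n →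
      coeff n F = coeff 1 F / ((n - 1) ! : ℂ) := by
  refine ⟨fun h => ⟨by simpa using h 0, fun n hn => ?_⟩, fun ⟨h0, h⟩ n => ?_⟩
  · obtain ⟨k, rfl⟩ : ∃ k, n = k + 1 := ⟨n - 1, by omega⟩
    have hk := h (k + 1)
    rw [Nat.factorial_succ] at hk
    push_cast at hk
    rw [Nat.add_sub_cancel, eq_div_iff (Nat.cast_ne_zero.mpr k.factorial_ne_zero)]
    refine mul_left_cancel₀ (Nat.cast_add_one_ne_zero k) ?_
    linear_combination hk
  · rcases n with _ | k
    · simp [h0]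
    · have hk : (k ! : ℂ) ≠ 0 := Nat.cast_ne_zero.mpr k.factorial_ne_zero
      rw [h (k + 1) k.succ_pos, Nat.add_sub_cancel, Nat.factorial_succ]
      push_cast
      field_simp

lemma isAddArith_eta_iff (F : ℂ⟦X⟧) : IsAddArith (eta F) ↔ LinearFactorialCoeffs F :=
  (isAddArith_comp_card_primeFactors_iff fun n => (n ! : ℂ) * coeff n F).trans
    (by simp [LinearFactorialCoeffs])

lemma coeff_odot (F G : ℂ⟦X⟧) (n : ℕ) :
    coeff n (odot F G) = n ! * coeff n F * coeff n G := by
  simp [odot]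

lemma odot_eq_C_mul_X_mul_derivative {F : ℂ⟦X⟧} (hF : LinearFactorialCoeffs F) (G : ℂ⟦X⟧) :
    odot F G = C (coeff 1 F) * X * d⁄dX ℂ G := by
  ext n
  rw [coeff_odot, hF, mul_assoc (C _), coeff_C_mul]
  rcases n with _ | n
  · simp
  · rw [coeff_succ_X_mul, coeff_derivative]; push_cast; ring

lemma odot_mul {F : ℂ⟦X⟧} (hF : LinearFactorialCoeffs F) (G H : ℂ⟦X⟧) :
    odot F (G * H) = odot F G * H + odot F H * G := by
  simp only [odot_eq_C_mul_X_mul_derivative hF, Derivation.leibniz, smul_eq_mul]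
  ring

lemma odot_exp (F : ℂ⟦X⟧) : odot F (exp ℂ) = F := by
  ext n
  have hn : (n ! : ℂ) ≠ 0 := Nat.cast_ne_zero.mpr n.factorial_ne_zero
  simp only [coeff_odot, coeff_exp, one_div, map_inv₀, map_natCast]
  field_simp

lemma odot_rescale (F G : ℂ⟦X⟧) (a : ℂ) : odot F (rescale a G) = rescale a (odot F G) := by
  ext n
  simp only [coeff_odot, coeff_rescale]
  ring

lemma exp_mul_exp_eq_rescale_two (A : Type*) [CommRing A] [Algebra ℚ A] :
    exp A * exp A = rescale 2 (exp A) := by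
  simpa [rescale_one, one_add_one_eq_two] using exp_mul_exp_eq_exp_add (A := A) 1 1

lemma mk_two_pow_mul_coeff (F : ℂ⟦X⟧) : (mk fun n => (2 : ℂ) ^ n * coeff n F) = rescale 2 F := by
  ext n
  simp [coeff_rescale]

lemma mk_two_div_factorial : (mk fun n => (2 : ℂ) / n !) = 2 * exp ℂ := by
  ext n
  rw [coeff_mk, ← map_ofNat C 2, coeff_C_mul, coeff_exp]
  simp [div_eq_mul_inv]

lemma rescale_two_eq_of_odot_mul_self {F : ℂ⟦X⟧}
    (h : ∀ G, odot F (G * G) = 2 * odot F G * G) : rescale 2 F = 2 * exp ℂ * F := by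
  have hexp := h (exp ℂ)
  rw [exp_mul_exp_eq_rescale_two, odot_rescale, odot_exp] at hexp
  rw [hexp]
  ring

lemma LinearFactorialCoeffs.rescale_two_eq {F : ℂ⟦X⟧} (hF : LinearFactorialCoeffs F) :
    rescale 2 F = 2 * exp ℂ * F :=
  rescale_two_eq_of_odot_mul_self fun G => by rw [odot_mul hF]; ring

lemma eq_zero_of_rescale_two_eq {K : Type*} [Field K] [CharZero K] {D : K⟦X⟧}
    (hD : rescale 2 D = 2 * exp K * D) (h1 : coeff 1 D = 0) : D = 0 := by
  ext n
  induction n using Nat.strong_induction_on with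
  | _ n ih =>
  rw [map_zero]
  rcases eq_or_ne n 1 with rfl | hn
  · exact h1
  have hconv : coeff n (exp K * D) = coeff n D := by
    rw [coeff_mul, Finset.sum_eq_single (0, n)]
    · simp
    · rintro ⟨i, j⟩ hij hne
      rw [Finset.HasAntidiagonal.mem_antidiagonal] at hij
      rw [ih j (by grind), map_zero, mul_zero]
    · simp
  have hcoeff := congrArg (coeff n) hD
  rw [coeff_rescale, mul_assoc, two_mul, map_add, hconv] at hcoeff
  have h2n : (2 : K) ^ n ≠ 2 := by
    rw [← pow_one (2 : K)]
    exact_mod_cast (Nat.pow_right_injective le_rfl).ne hn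
  have hfactor : ((2 : K) ^ n - 2) * coeff n D = 0 := by linear_combination hcoeff
  exact (mul_eq_zero.mp hfactor).resolve_left (sub_ne_zero.mpr h2n)

lemma linearFactorialCoeffs_of_rescale_two_eq {F : ℂ⟦X⟧} (hF : rescale 2 F = 2 * exp ℂ * F) :
    LinearFactorialCoeffs F := by
  set F₀ : ℂ⟦X⟧ := mk fun n => n * coeff 1 F / (n ! : ℂ)
  have hF₀ : LinearFactorialCoeffs F₀ := fun n => by
    have hn : (n ! : ℂ) ≠ 0 := Nat.cast_ne_zero.mpr n.factorial_ne_zero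
    simp only [F₀, coeff_mk, Nat.cast_one, one_mul, Nat.factorial_one, div_one]
    field_simp
  have hdiff : F - F₀ = 0 := eq_zero_of_rescale_two_eq
    (by rw [map_sub, hF, hF₀.rescale_two_eq, mul_sub]) (by simp [F₀])
  rwa [sub_eq_zero.mp hdiff]

theorem stmt_6_general (F : PowerSeries ℂ) :
    [(PowerSeries.coeff 0 F = 0 ∧ ∀ n : ℕ, 0 < n →
        PowerSeries.coeff n F = PowerSeries.coeff 1 F / (Nat.factorial (n - 1) : ℂ)),
     IsAddArith (eta F),
     (∀ G H : PowerSeries ℂ, odot F (G * H) = odot F G * H + odot F H * G),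
     (∀ G : PowerSeries ℂ, odot F (G * G) = 2 * odot F G * G),
     (PowerSeries.mk fun n => (2 : ℂ) ^ n * PowerSeries.coeff n F)
        = (PowerSeries.mk fun n => (2 : ℂ) / (Nat.factorial n : ℂ)) * F].TFAE := by
  rw [← linearFactorialCoeffs_iff, mk_two_pow_mul_coeff, mk_two_div_factorial]
  tfae_have 1 ↔ 2 := (isAddArith_eta_iff F).symm
  tfae_have 1 → 3 := odot_mul
  tfae_have 3 → 4 := fun h G => by rw [h]; ring
  tfae_have 4 → 5 := rescale_two_eq_of_odot_mul_self
  tfae_have 5 → 1 := linearFactorialCoeffs_of_rescale_two_eq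
  tfae_finish

/-- Theorem 1.4: additive version of the Lambek–Carlitz characterization of
exponential series. -/
theorem stmt_6 (F : PowerSeries ℂ) (h1 : PowerSeries.coeff 1 F ≠ 0) :
    [(PowerSeries.coeff 0 F = 0 ∧ ∀ n : ℕ, 0 < n →
        PowerSeries.coeff n F = PowerSeries.coeff 1 F / (Nat.factorial (n - 1) : ℂ)),
     IsAddArith (eta F),
     (∀ G H : PowerSeries ℂ, odot F (G * H) = odot F G * H + odot F H * G),
     (∀ G : PowerSeries ℂ, odot F (G * G) = 2 * odot F G * G),
     (PowerSeries.mk fun n => (2 : ℂ) ^ n * PowerSeries.coeff n F)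
        = (PowerSeries.mk fun n => (2 : ℂ) / (Nat.factorial n : ℂ)) * F].TFAE :=
  stmt_6_general F
end

section
/- (Carlitz implication (5) ⟹ (1) of Theorem 1.3.) Let F = Σ_{n≥0} a_n X^n ∈ ℂ[[X]] with a_1 ≠ 0. If Σ_{n≥0} 2^n a_n X^n = F·F (i.e. 2^n a_n = Σ_{k=0}^{n} a_k a_{n−k} for all n ≥ 0), then a_n = a_1^n / n! for all n ≥ 0. -/
/-!
The hypothesis says `F(2X) = F(X)²`. Comparing the coefficients of `X` gives `2a₁ = 2a₀a₁`, so
`a₀ = 1`; comparing those of `X^(n+2)` then gives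
`(2^(n+2) - 2) a_{n+2} = ∑_{i+j=n} a_{i+1} a_{j+1}`, so every solution is determined by `a₁`.
Since `exp(aX)² = exp(2aX)`, the solution with linear coefficient `a₁` is `exp(a₁X)`.
-/

open Finset

namespace PowerSeries

variable {R : Type*} [CommRing R] {F G : R⟦X⟧}

theorem coeff_add_two_of_rescale_two_eq_mul_self (hF : rescale 2 F = F * F)
    (h0 : constantCoeff F = 1) (n : ℕ) :
    (2 ^ (n + 2) - 2) * coeff (n + 2) F =
      ∑ p ∈ antidiagonal n, coeff (p.1 + 1) F * coeff (p.2 + 1) F := by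
  have h := congr(coeff (n + 2) $hF)
  rw [coeff_rescale, coeff_mul, Finset.Nat.sum_antidiagonal_succ,
    Finset.Nat.sum_antidiagonal_succ'] at h
  simp only [coeff_zero_eq_constantCoeff_apply, h0] at h
  linear_combination h

theorem constantCoeff_eq_one_of_rescale_two_eq_mul_self [NoZeroDivisors R] [NeZero (2 : R)]
    (hF : rescale 2 F = F * F) (h1 : coeff 1 F ≠ 0) : constantCoeff F = 1 := by
  have h := congr(coeff 1 $hF)
  rw [coeff_rescale, coeff_mul, Finset.Nat.sum_antidiagonal_succ] at h
  simp only [zero_add, pow_one, Finset.Nat.antidiagonal_zero, sum_singleton,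
    coeff_zero_eq_constantCoeff_apply] at h
  have h' : (2 * coeff 1 F) * (constantCoeff F - 1) = 0 := by linear_combination -h
  exact sub_eq_zero.mp ((mul_eq_zero.mp h').resolve_left (mul_ne_zero two_ne_zero h1))

theorem eq_of_rescale_two_eq_mul_self [IsDomain R] [CharZero R]
    (hF : rescale 2 F = F * F) (hG : rescale 2 G = G * G)
    (h0F : constantCoeff F = 1) (h0G : constantCoeff G = 1) (h1 : coeff 1 F = coeff 1 G) :
    F = G := by
  ext m
  induction m using Nat.strong_induction_on with
  | _ m ih =>
    match m with
    | 0 => simp [h0F, h0G]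
    | 1 => exact h1
    | n + 2 =>
      have hsum : ∑ p ∈ antidiagonal n, coeff (p.1 + 1) F * coeff (p.2 + 1) F =
          ∑ p ∈ antidiagonal n, coeff (p.1 + 1) G * coeff (p.2 + 1) G := by
        refine Finset.sum_congr rfl fun p hp => ?_
        rw [HasAntidiagonal.mem_antidiagonal] at hp
        rw [ih (p.1 + 1) (by omega), ih (p.2 + 1) (by omega)]
      have hne : (2 ^ (n + 2) - 2 : R) ≠ 0 := by
        rw [sub_ne_zero]
        exact_mod_cast (Nat.pow_lt_pow_right one_lt_two (by omega : 1 < n + 2)).ne'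
      apply mul_left_cancel₀ hne
      rw [coeff_add_two_of_rescale_two_eq_mul_self hF h0F,
        coeff_add_two_of_rescale_two_eq_mul_self hG h0G, hsum]

theorem rescale_two_rescale_exp [Algebra ℚ R] (a : R) :
    rescale 2 (rescale a (exp R)) = rescale a (exp R) * rescale a (exp R) := by
  rw [exp_mul_exp_eq_exp_add, rescale_rescale, mul_two]

end PowerSeries

open PowerSeries

/-- Carlitz implication (5) ⟹ (1) of Theorem 1.3: if `∑ 2ⁿ aₙ Xⁿ = F·F`
then `aₙ = a₁ⁿ/n!` for all `n`. -/
theorem stmt_9 (F : PowerSeries ℂ) (h1 : PowerSeries.coeff 1 F ≠ 0)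
    (h : (PowerSeries.mk fun n => (2 : ℂ) ^ n * PowerSeries.coeff n F) = F * F) :
    ∀ n : ℕ, PowerSeries.coeff n F
      = (PowerSeries.coeff 1 F) ^ n / (Nat.factorial n : ℂ) := by
  set E := rescale (coeff 1 F) (exp ℂ)
  have hF : rescale 2 F = F * F := by rw [← h]; rfl
  have hFE : F = E :=
    eq_of_rescale_two_eq_mul_self hF (rescale_two_rescale_exp _)
      (constantCoeff_eq_one_of_rescale_two_eq_mul_self hF h1)
      (by simp [E, ← coeff_zero_eq_constantCoeff_apply]) (by simp [E])
  intro n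
  rw [hFE]
  simp [E, div_eq_mul_inv]
end

section
/- (Additive version of Theorem 2.3, instantiating Theorem 2.2 at the Möbius category Red with B(n) = [n]_q!.) Let q ≥ 2 be a prime power and let F = Σ_{n≥0} a_n X^n ∈ ℂ[[X]] with a_1 ≠ 0. The following statements are equivalent: (1) a_n = n·a_1 / [n]_q! for all n ≥ 0; (2) the function hF : ℕ → ℂ, hF(m) = a_m·[m]_q!, is binomial additive, i.e. hF(m+n) = hF(m) + hF(n) for all m, n ≥ 0; (3) F ⊙_q (G·H) = (F ⊙_q G)·H + (F ⊙_q H)·G for all G, H ∈ ℂ[[X]]; (4) F ⊙_q (G·G) = 2·(F ⊙_q G)·G for all G ∈ ℂ[[X]]; (5) Σ_{n≥0} G_n(q)·a_n X^n = 2·(Σ_{n≥0} (1/[n]_q!) X^n)·F, where G_n(q) = Σ_{k=0}^{n} [n]_q!/([k]_q!·[n−k]_q!) are the Galois numbers. -/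
/-!
Everything is governed by `h n = aₙ·[n]_q!`. Coefficientwise, (3) and (4) compare `h (i + j)` with
`h i + h j`, so they amount to additivity of `h` ((4) gives (3) by polarization), and additivity on
`ℕ` means `h n = n·h 1`, which is (1). The `n`-th coefficient of the difference of the two sides of
(5) is `∑_{i+j=n} (h n - h i - h j) / ([i]_q!·[j]_q!)`. The weights are positive and, once
`h k = k·h 1` for `k < n`, all defects in this sum equal `h n - n·h 1` except the two vanishing end
terms, so (5) forces additivity by strong induction.
-/

open PowerSeries

/-- The `q`-factorial `[n]_q! = ∏_{i=1}^{n} (1 + q + ⋯ + q^{i-1})`, with `[0]_q! = 1`. -/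
def qFactorial (q n : ℕ) : ℕ :=
  ∏ i ∈ Finset.range n, ∑ j ∈ Finset.range (i + 1), q ^ j

/-- The Galois number `Gₙ(q) = ∑_{k=0}^{n} [n]_q!/([k]_q!·[n−k]_q!)` (as a complex number). -/
noncomputable def galoisNumber (q n : ℕ) : ℂ :=
  ∑ k ∈ Finset.range (n + 1),
    (qFactorial q n : ℂ) / ((qFactorial q k : ℂ) * (qFactorial q (n - k) : ℂ))

/-- The "multiplication" `⊙_q` of formal power series:
`(∑ aₙ Xⁿ) ⊙_q (∑ bₙ Xⁿ) = ∑ [n]_q!·aₙ·bₙ Xⁿ`. -/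
noncomputable def odotQ (q : ℕ) (F G : PowerSeries ℂ) : PowerSeries ℂ :=
  PowerSeries.mk fun n => (qFactorial q n : ℂ) * PowerSeries.coeff n F * PowerSeries.coeff n G

open Finset

section Additive

variable {M : Type*}

theorem additive_iff_eq_nsmul [AddCommMonoid M] [IsLeftCancelAdd M] (h : ℕ → M) :
    (∀ m n, h (m + n) = h m + h n) ↔ ∀ n, h n = n • h 1 := by
  constructor
  · intro hadd n
    induction n with
    | zero => simpa using (hadd 0 0).symm
    | succ k ih => rw [hadd, ih, succ_nsmul]
  · intro hlin m n
    rw [hlin, hlin m, hlin n, add_nsmul]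

theorem eq_nsmul_of_sum_antidiagonal_smul_eq_zero [AddCommGroup M] [Module ℝ M]
    (h : ℕ → M) (w : ℕ → ℝ) (hw : ∀ k, 0 < w k)
    (hsum : ∀ n, ∑ p ∈ antidiagonal n, (w p.1 * w p.2) • (h (p.1 + p.2) - h p.1 - h p.2) = 0) :
    ∀ n, h n = n • h 1 := by
  have h0 : h 0 = 0 := by
    have := hsum 0
    simp only [Nat.antidiagonal_zero, sum_singleton, add_zero, sub_self, zero_sub, smul_neg,
      neg_eq_zero, smul_eq_zero] at this
    exact this.resolve_left (mul_pos (hw 0) (hw 0)).ne'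
  intro n
  induction n using Nat.strong_induction_on with
  | _ n ih =>
    match n with
    | 0 => simp [h0]
    | 1 => simp
    | n + 2 =>
      have inner : ∀ p ∈ antidiagonal n,
          (w (p.1 + 1) * w (p.2 + 1)) • (h (p.1 + 1 + (p.2 + 1)) - h (p.1 + 1) - h (p.2 + 1))
            = (w (p.1 + 1) * w (p.2 + 1)) • (h (n + 2) - (n + 2) • h 1) := by
        intro p hp
        rw [HasAntidiagonal.mem_antidiagonal] at hp
        rw [ih (p.1 + 1) (by omega), ih (p.2 + 1) (by omega), sub_sub, ← add_nsmul, ← hp,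
          show p.1 + 1 + (p.2 + 1) = p.1 + p.2 + 2 by omega]
      have hpos : 0 < ∑ p ∈ antidiagonal n, w (p.1 + 1) * w (p.2 + 1) :=
        sum_pos (fun p _ => mul_pos (hw _) (hw _)) ⟨(0, n), by simp⟩
      have := hsum (n + 2)
      rw [Nat.sum_antidiagonal_succ, Nat.sum_antidiagonal_succ', sum_congr rfl inner,
        ← sum_smul] at this
      simp only [zero_add, add_zero, h0, sub_zero, sub_self, smul_zero, smul_eq_zero,
        hpos.ne', false_or, sub_eq_zero] at this
      exact this

end Additive

theorem qFactorial_pos (q n : ℕ) : 0 < qFactorial q n :=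
  prod_pos fun i _ => sum_pos' (fun _ _ => Nat.zero_le _) ⟨0, by simp, by simp⟩

theorem qFactorial_cast_ne_zero (q n : ℕ) : (qFactorial q n : ℂ) ≠ 0 :=
  Nat.cast_ne_zero.mpr (qFactorial_pos q n).ne'

theorem qFactorial_one (q : ℕ) : qFactorial q 1 = 1 := by simp [qFactorial]

/-- The function `h_F n = aₙ·[n]_q!` of the paper. -/
noncomputable def scaledCoeff (q : ℕ) (F : ℂ⟦X⟧) (n : ℕ) : ℂ :=
  coeff n F * qFactorial q n

section ScaledCoeff

variable (q : ℕ) (F : ℂ⟦X⟧)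

theorem scaledCoeff_one : scaledCoeff q F 1 = coeff 1 F := by
  simp [scaledCoeff, qFactorial_one]

theorem coeff_eq_iff_scaledCoeff_eq_nsmul :
    (∀ n : ℕ, coeff n F = n * coeff 1 F / qFactorial q n) ↔
      ∀ n, scaledCoeff q F n = n • scaledCoeff q F 1 := by
  simp only [scaledCoeff_one, nsmul_eq_mul]
  simp only [scaledCoeff, ← eq_div_iff (qFactorial_cast_ne_zero q _)]

theorem coeff_odotQ (G : ℂ⟦X⟧) (n : ℕ) :
    coeff n (odotQ q F G) = scaledCoeff q F n * coeff n G := by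
  rw [odotQ, coeff_mk, scaledCoeff, mul_comm (qFactorial q n : ℂ)]

theorem odotQ_add (G H : ℂ⟦X⟧) : odotQ q F (G + H) = odotQ q F G + odotQ q F H := by
  ext n
  simp only [coeff_odotQ, map_add, mul_add]

theorem odotQ_X_pow (k : ℕ) : odotQ q F (X ^ k) = C (scaledCoeff q F k) * X ^ k := by
  ext n
  rw [coeff_odotQ, coeff_X_pow, coeff_C_mul_X_pow]
  split_ifs with hn <;> simp [hn]

theorem odotQ_mul_of_additive
    (hadd : ∀ m n, scaledCoeff q F (m + n) = scaledCoeff q F m + scaledCoeff q F n)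
    (G H : ℂ⟦X⟧) : odotQ q F (G * H) = odotQ q F G * H + odotQ q F H * G := by
  ext n
  rw [mul_comm (odotQ q F H), map_add, coeff_odotQ, coeff_mul, coeff_mul, coeff_mul, mul_sum,
    ← sum_add_distrib]
  refine sum_congr rfl fun p hp => ?_
  rw [← HasAntidiagonal.mem_antidiagonal.mp hp, hadd, coeff_odotQ, coeff_odotQ]
  ring

theorem odotQ_mul_of_odotQ_mul_self (hsq : ∀ G, odotQ q F (G * G) = 2 * odotQ q F G * G)
    (G H : ℂ⟦X⟧) : odotQ q F (G * H) = odotQ q F G * H + odotQ q F H * G := by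
  have htwo : (2 : ℂ⟦X⟧) ≠ 0 := by
    rw [← map_ofNat C 2]
    exact (map_ne_zero_iff _ C_injective).mpr two_ne_zero
  have hpol := hsq (G + H)
  rw [add_mul, mul_add, mul_add, odotQ_add, odotQ_add, odotQ_add, hsq, hsq, mul_comm H G,
    odotQ_add] at hpol
  refine mul_left_cancel₀ htwo ?_
  linear_combination hpol

theorem additive_of_odotQ_mul
    (hmul : ∀ G H, odotQ q F (G * H) = odotQ q F G * H + odotQ q F H * G)
    (m n : ℕ) : scaledCoeff q F (m + n) = scaledCoeff q F m + scaledCoeff q F n := by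
  have h := congrArg (coeff (m + n)) (hmul (X ^ m) (X ^ n))
  rw [← pow_add, odotQ_X_pow, odotQ_X_pow, odotQ_X_pow, mul_assoc, mul_assoc, ← pow_add,
    ← pow_add, add_comm n m, map_add] at h
  simpa only [coeff_C_mul_X_pow, if_true] using h

theorem coeff_mk_galoisNumber_mul_sub_eq_sum (n : ℕ) :
    coeff n (mk fun n => galoisNumber q n * coeff n F)
        - coeff n (2 * (mk fun n => 1 / (qFactorial q n : ℂ)) * F)
      = ∑ p ∈ antidiagonal n, (((qFactorial q p.1 : ℝ)⁻¹ * (qFactorial q p.2 : ℝ)⁻¹) •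
          (scaledCoeff q F (p.1 + p.2) - scaledCoeff q F p.1 - scaledCoeff q F p.2)) := by
  set f : ℕ × ℕ → ℂ := fun p => 1 / (qFactorial q p.1 : ℂ) * coeff p.2 F with hf
  have term : ∀ p ∈ antidiagonal n,
      (((qFactorial q p.1 : ℝ)⁻¹ * (qFactorial q p.2 : ℝ)⁻¹) •
          (scaledCoeff q F (p.1 + p.2) - scaledCoeff q F p.1 - scaledCoeff q F p.2))
        = (qFactorial q n : ℂ) / (qFactorial q p.1 * qFactorial q (n - p.1)) * coeff n F
            - f p.swap - f p := by
    intro p hp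
    obtain rfl := HasAntidiagonal.mem_antidiagonal.mp hp
    simp only [hf, Complex.real_smul, scaledCoeff, Prod.fst_swap, Prod.snd_swap,
      Nat.add_sub_cancel_left]
    push_cast
    field_simp [qFactorial_cast_ne_zero q p.1, qFactorial_cast_ne_zero q p.2]
  have galois : galoisNumber q n * coeff n F = ∑ p ∈ antidiagonal n,
      (qFactorial q n : ℂ) / (qFactorial q p.1 * qFactorial q (n - p.1)) * coeff n F := by
    rw [galoisNumber, sum_mul, Nat.sum_antidiagonal_eq_sum_range_succ_mk]
  have convolution : coeff n (2 * (mk fun n => 1 / (qFactorial q n : ℂ)) * F)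
      = 2 * ∑ p ∈ antidiagonal n, f p := by
    rw [mul_assoc, ← map_ofNat C 2, coeff_C_mul, coeff_mul]
    simp only [hf, coeff_mk]
  rw [sum_congr rfl term, sum_sub_distrib, sum_sub_distrib, Nat.sum_antidiagonal_swap (f := f),
    coeff_mk, galois, convolution]
  ring

theorem mk_galoisNumber_mul_eq_iff :
    (mk fun n => galoisNumber q n * coeff n F) = 2 * (mk fun n => 1 / (qFactorial q n : ℂ)) * F ↔
      ∀ n, ∑ p ∈ antidiagonal n, (((qFactorial q p.1 : ℝ)⁻¹ * (qFactorial q p.2 : ℝ)⁻¹) •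
        (scaledCoeff q F (p.1 + p.2) - scaledCoeff q F p.1 - scaledCoeff q F p.2)) = 0 := by
  simp only [← coeff_mk_galoisNumber_mul_sub_eq_sum, sub_eq_zero]
  exact PowerSeries.ext_iff

end ScaledCoeff

theorem stmt_11_general (q : ℕ)
    (F : PowerSeries ℂ) :
    [(∀ n : ℕ, PowerSeries.coeff n F
        = (n : ℂ) * PowerSeries.coeff 1 F / (qFactorial q n : ℂ)),
     (∀ m n : ℕ,
        PowerSeries.coeff (m + n) F * (qFactorial q (m + n) : ℂ)
          = PowerSeries.coeff m F * (qFactorial q m : ℂ)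
              + PowerSeries.coeff n F * (qFactorial q n : ℂ)),
     (∀ G H : PowerSeries ℂ, odotQ q F (G * H) = odotQ q F G * H + odotQ q F H * G),
     (∀ G : PowerSeries ℂ, odotQ q F (G * G) = 2 * odotQ q F G * G),
     (PowerSeries.mk fun n => galoisNumber q n * PowerSeries.coeff n F)
        = 2 * (PowerSeries.mk fun n => 1 / (qFactorial q n : ℂ)) * F].TFAE := by
  show [_, ∀ m n, scaledCoeff q F (m + n) = scaledCoeff q F m + scaledCoeff q F n, _, _, _].TFAE
  tfae_have 1 ↔ 2 :=
    (coeff_eq_iff_scaledCoeff_eq_nsmul q F).trans (additive_iff_eq_nsmul _).symm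
  tfae_have 2 → 3 := odotQ_mul_of_additive q F
  tfae_have 3 → 2 := additive_of_odotQ_mul q F
  tfae_have 3 → 4 := fun hmul G => by rw [hmul, two_mul, add_mul]
  tfae_have 4 → 3 := odotQ_mul_of_odotQ_mul_self q F
  tfae_have 2 → 5 := fun hadd => (mk_galoisNumber_mul_eq_iff q F).mpr fun n =>
    sum_eq_zero fun p _ => by rw [hadd, sub_sub, sub_self, smul_zero]
  tfae_have 5 → 2 := fun h5 => (additive_iff_eq_nsmul _).mpr <|
    eq_nsmul_of_sum_antidiagonal_smul_eq_zero (scaledCoeff q F) (fun k => (qFactorial q k : ℝ)⁻¹)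
      (fun k => by simp [qFactorial_pos]) ((mk_galoisNumber_mul_eq_iff q F).mp h5)
  tfae_finish

/-- Additive version of Theorem 2.3 (Theorem 2.2 instantiated at the Möbius
category `Red`, whose parameters are `B(n) = [n]_q!`). -/
theorem stmt_11 (q : ℕ) (hq : IsPrimePow q) (hq2 : 2 ≤ q)
    (F : PowerSeries ℂ) (h1 : PowerSeries.coeff 1 F ≠ 0) :
    [(∀ n : ℕ, PowerSeries.coeff n F
        = (n : ℂ) * PowerSeries.coeff 1 F / (qFactorial q n : ℂ)),
     (∀ m n : ℕ,
        PowerSeries.coeff (m + n) F * (qFactorial q (m + n) : ℂ)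
          = PowerSeries.coeff m F * (qFactorial q m : ℂ)
              + PowerSeries.coeff n F * (qFactorial q n : ℂ)),
     (∀ G H : PowerSeries ℂ, odotQ q F (G * H) = odotQ q F G * H + odotQ q F H * G),
     (∀ G : PowerSeries ℂ, odotQ q F (G * G) = 2 * odotQ q F G * G),
     (PowerSeries.mk fun n => galoisNumber q n * PowerSeries.coeff n F)
        = 2 * (PowerSeries.mk fun n => 1 / (qFactorial q n : ℂ)) * F].TFAE :=
  stmt_11_general q F
end
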